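/- arXiv:1708.04369 — 3 statements merged into one kernel-verified Lean document; each statement's English description precedes it below -/
import Mathlib

section
/- If a sequence of non-negative reals a_0, a_1, ..., a_{C-1} satisfies a_p > ε · Σ_{i=0}^{p-1} a_i for all p in the range [C − (1/ε)², C − 1] (where (1/ε)² is an integer and C > (1/ε)²), then Σ_{i=0}^{C−(1/ε)²−1} a_i ≤ ε · Σ_{i=C−(1/ε)²}^{C−1} a_i. -/
/-!
Each of the last `K` terms exceeds `ε` times the mass of everything before it, hence `ε · S`
where `S` is the mass of the first `C - K` terms; so the last `K` terms carry at least
`K ε S = S / ε`.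
-/

open Finset

theorem nsmul_mul_sum_range_le_sum_Ico {R : Type*} [Semiring R] [PartialOrder R] [IsOrderedRing R]
    {a : ℕ → R} {ε : R} {n m : ℕ} (ha : ∀ i, 0 ≤ a i) (hε : 0 ≤ ε)
    (h : ∀ p ∈ Ico n m, ε * ∑ i ∈ range p, a i ≤ a p) :
    (m - n) • (ε * ∑ i ∈ range n, a i) ≤ ∑ i ∈ Ico n m, a i := by
  rw [← Nat.card_Ico, ← sum_const]
  refine sum_le_sum fun p hp => le_trans ?_ (h p hp)
  have hprefix : ∑ i ∈ range n, a i ≤ ∑ i ∈ range p, a i :=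
    sum_le_sum_of_subset_of_nonneg (range_subset_range.2 (mem_Ico.1 hp).1) fun i _ _ => ha i
  exact mul_le_mul_of_nonneg_left hprefix hε

theorem stmt_5_general (ε : ℝ) (K C : ℕ) (a : ℕ → ℝ)
    (hε0 : 0 < ε)
    (hK : (K : ℝ) = (1/ε)^2) (hKC : K < C)
    (ha : ∀ i, 0 ≤ a i)
    (hbad : ∀ p, C - K ≤ p → p ≤ C - 1 →
      a p > ε * ∑ i ∈ Finset.range p, a i) :
    ∑ i ∈ Finset.range (C - K), a i ≤ ε * ∑ i ∈ Finset.Ico (C - K) C, a i := by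
  have hwindow : K • (ε * ∑ i ∈ range (C - K), a i) ≤ ∑ i ∈ Ico (C - K) C, a i := by
    have := nsmul_mul_sum_range_le_sum_Ico (m := C) ha hε0.le fun p hp =>
      (hbad p (mem_Ico.1 hp).1 (Nat.le_sub_one_of_lt (mem_Ico.1 hp).2)).le
    rwa [Nat.sub_sub_self hKC.le] at this
  have hεK : ε * K * ε = 1 := by rw [hK]; field_simp
  rw [nsmul_eq_mul] at hwindow
  calc ∑ i ∈ range (C - K), a i = ε * (K * (ε * ∑ i ∈ range (C - K), a i)) := by
        linear_combination -(∑ i ∈ range (C - K), a i) * hεK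
    _ ≤ ε * ∑ i ∈ Ico (C - K) C, a i := mul_le_mul_of_nonneg_left hwindow hε0.le

/-- If none of the last (1/ε)² batches is good, then the first C − (1/ε)² batches
contain at most an ε fraction of the mass of the last (1/ε)² batches. -/
theorem stmt_5 (ε : ℝ) (K C : ℕ) (a : ℕ → ℝ)
    (hε0 : 0 < ε) (hε1 : ε < 1)
    (hK : (K : ℝ) = (1/ε)^2) (hKC : K < C)
    (ha : ∀ i, 0 ≤ a i)
    (hbad : ∀ p, C - K ≤ p → p ≤ C - 1 →
      a p > ε * ∑ i ∈ Finset.range p, a i) :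
    ∑ i ∈ Finset.range (C - K), a i ≤ ε * ∑ i ∈ Finset.Ico (C - K) C, a i :=
  stmt_5_general ε K C a hε0 hK hKC ha hbad
end

section
/- In any feasible fractional LP solution, if j ≺ i, then the fractional support interval of i cannot be contained in the left half of the minimal laminar interval containing the support of j, whenever j has positive fractional support in the right half of that interval. Formally: if y is feasible for the time-indexed LP, j ≺ i, I is an interval with midpoint μ, the support of j intersects (μ, right end of I], and the support of i is contained in [left end of I, μ], then we reach a contradiction — i.e., such a configuration is infeasible. -/
/-!
Since the support of `i` ends at `μ`, all of its mass lies in `[1, μ]`, so the precedence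
constraint at time `μ - 1` forces `j` to have cumulative mass `1` by time `μ - 1`. But `j` puts
positive mass on some `t₀ > μ`, so its mass up to `μ - 1` is at most `1 - y j t₀ < 1`.
-/

open Finset

theorem mem_Icc_one_of_ne_zero {M : Type*} [Zero M] {f : ℕ → M} {T t : ℕ}
    (hf : ∀ t, t = 0 ∨ T < t → f t = 0) (ht : f t ≠ 0) : t ∈ Icc 1 T := by
  rw [mem_Icc]
  by_contra h
  exact ht (hf t (by omega))

theorem sum_Icc_eq_of_support_le {M : Type*} [AddCommMonoid M] {f : ℕ → M} {a s T : ℕ}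
    (hs : ∀ t, f t ≠ 0 → t ≤ s) (hsT : s ≤ T) :
    ∑ t ∈ Icc a s, f t = ∑ t ∈ Icc a T, f t :=
  sum_subset (Icc_subset_Icc_right hsT) fun t ht hts => by
    by_contra h
    exact hts (mem_Icc.mpr ⟨(mem_Icc.mp ht).1, hs t h⟩)

theorem sum_Icc_add_le_of_lt {M : Type*} [AddCommMonoid M] [PartialOrder M]
    [IsOrderedAddMonoid M] {f : ℕ → M} (hf : ∀ t, 0 ≤ f t) {a s t₀ T : ℕ} (hs : s < t₀)
    (ht₀ : t₀ ∈ Icc a T) :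
    ∑ t ∈ Icc a s, f t + f t₀ ≤ ∑ t ∈ Icc a T, f t := by
  have hnot : t₀ ∉ Icc a s := fun h => (mem_Icc.mp h).2.not_gt hs
  have hsub : insert t₀ (Icc a s) ⊆ Icc a T := by
    intro t ht
    rw [mem_insert, mem_Icc] at ht
    rw [mem_Icc] at ht₀ ⊢
    omega
  calc ∑ t ∈ Icc a s, f t + f t₀ = ∑ t ∈ insert t₀ (Icc a s), f t := by
        rw [sum_insert hnot, add_comm]
    _ ≤ ∑ t ∈ Icc a T, f t := sum_le_sum_of_subset_of_nonneg hsub fun t _ _ => hf t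

theorem stmt_11_general (n T : ℕ) (y : Fin n → ℕ → ℝ) (j i : Fin n) (a μ b : ℕ)
    (hnonneg : ∀ j' t, 0 ≤ y j' t)
    (hzero : ∀ j' t, t = 0 ∨ T < t → y j' t = 0)
    (hsum : ∀ j', ∑ t ∈ Finset.Icc 1 T, y j' t = 1)
    (hprec : ∀ t, ∑ t' ∈ Finset.Icc 1 t, y j t' ≥ ∑ t' ∈ Finset.Icc 1 (t+1), y i t')
    (hjsupp : ∃ t, μ < t ∧ t ≤ b ∧ 0 < y j t)
    (hisupp : ∀ t, y i t ≠ 0 → a ≤ t ∧ t ≤ μ) :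
    False := by
  obtain ⟨t₀, hμt₀, -, hjt₀⟩ := hjsupp
  have ht₀ : t₀ ∈ Icc 1 T := mem_Icc_one_of_ne_zero (hzero j) hjt₀.ne'
  -- `μ - 1 + 1` rather than `μ` keeps the case `μ = 0` uniform with the rest.
  have hi : ∑ t ∈ Icc 1 (μ - 1 + 1), y i t = 1 :=
    (sum_Icc_eq_of_support_le (fun t ht => by have := (hisupp t ht).2; omega)
      (by rw [mem_Icc] at ht₀; omega)).trans (hsum i)
  have hj := sum_Icc_add_le_of_lt (hnonneg j) (show μ - 1 < t₀ by omega) ht₀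
  linarith [hprec (μ - 1), hsum j]

/-- If j ≺ i, j has positive support in the right half (μ, b] of an interval
[a,b], and the support of i lies in the left half [a, μ], the LP is infeasible. -/
theorem stmt_11 (n T : ℕ) (y : Fin n → ℕ → ℝ) (j i : Fin n) (a μ b : ℕ)
    (hnonneg : ∀ j' t, 0 ≤ y j' t)
    (hzero : ∀ j' t, t = 0 ∨ T < t → y j' t = 0)
    (hsum : ∀ j', ∑ t ∈ Finset.Icc 1 T, y j' t = 1)
    (hprec : ∀ t, ∑ t' ∈ Finset.Icc 1 t, y j t' ≥ ∑ t' ∈ Finset.Icc 1 (t+1), y i t')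
    (haμ : a ≤ μ) (hμb : μ ≤ b)
    (hjsupp : ∃ t, μ < t ∧ t ≤ b ∧ 0 < y j t)
    (hisupp : ∀ t, y i t ≠ 0 → a ≤ t ∧ t ≤ μ) :
    False :=
  stmt_11_general n T y j i a μ b hnonneg hzero hsum hprec hjsupp hisupp
end

section
/- Summing the per-call discard bound over a recursion tree: if in each recursive call on an interval I the algorithm discards at most (ε/(4m))·(number of jobs it handles exclusively) + ε|I|/(4 log n) jobs, the exclusive job sets across calls are disjoint subsets of [n] with n ≤ mT, the intervals at each level of the laminar family partition [T], and there are at most log n levels, then the total number of discarded jobs is at most εT/4 + εT/4 = εT/2. -/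
/-! The bound splits into two sums. The exclusive job sets are disjoint subsets of `Fin n`, so
their sizes add up to at most `n ≤ mT`, which makes the first terms contribute `εT/4`. Grouping
the calls by level, the lengths at one level add up to at most `T`, so all lengths add up to at
most `Lv · T ≤ log₂ n · T`, which makes the second terms contribute another `εT/4`. -/

open Finset Function

theorem Finset.sum_card_le_card_of_pairwise_disjoint {ι α : Type*} [Fintype ι] [Fintype α]
    {t : ι → Finset α} (h : Pairwise (Disjoint on t)) :
    ∑ i, #(t i) ≤ Fintype.card α :=
  (card_disjiUnion univ t fun _ _ _ _ hij => h hij).symm.trans_le (card_le_univ _)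

theorem Finset.sum_le_card_nsmul_of_sum_fiber_le {ι κ M : Type*} [DecidableEq κ]
    [AddCommMonoid M] [PartialOrder M] [IsOrderedAddMonoid M]
    {s : Finset ι} {t : Finset κ} {g : ι → κ} (hg : ∀ i ∈ s, g i ∈ t) (f : ι → M) {T : M}
    (hfiber : ∀ j ∈ t, ∑ i ∈ s with g i = j, f i ≤ T) :
    ∑ i ∈ s, f i ≤ #t • T := by
  rw [← sum_fiberwise_of_maps_to hg]
  exact sum_le_card_nsmul t _ T hfiber

theorem stmt_17_general {ι : Type*} [Fintype ι] (n Lv : ℕ) (ε m T : ℝ)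
    (hε : 0 < ε) (hm : 0 < m) (hT : 0 < T) (hn : 1 < n)
    (len : ι → ℝ) (jobs : ι → Finset (Fin n)) (discard : ι → ℝ)
    (level : ι → ℕ)
    (hlev : ∀ c, level c < Lv)
    (hLv : (Lv : ℝ) ≤ Real.logb 2 n)
    (hlen : ∀ ℓ : ℕ, ∑ c ∈ Finset.univ.filter (fun c => level c = ℓ), len c ≤ T)
    (hdisj : ∀ c₁ c₂, c₁ ≠ c₂ → Disjoint (jobs c₁) (jobs c₂))
    (hnT : (n : ℝ) ≤ m * T)
    (hdisc : ∀ c, discard c ≤ ε / (4 * m) * (jobs c).card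
      + ε * len c / (4 * Real.logb 2 n)) :
    ∑ c, discard c ≤ ε * T / 2 := by
  set L := Real.logb 2 n
  have hL : 0 < L := Real.logb_pos one_lt_two (by exact_mod_cast hn)
  have hcard : ∑ c, (#(jobs c) : ℝ) ≤ m * T := by
    have := sum_card_le_card_of_pairwise_disjoint (t := jobs) fun c₁ c₂ => hdisj c₁ c₂
    rw [Fintype.card_fin] at this
    exact (by exact_mod_cast this : ∑ c, (#(jobs c) : ℝ) ≤ n).trans hnT
  have hlensum : ∑ c, len c ≤ L * T := by
    have := sum_le_card_nsmul_of_sum_fiber_le (t := range Lv)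
      (fun c _ => mem_range.mpr (hlev c)) len fun ℓ _ => hlen ℓ
    rw [card_range, nsmul_eq_mul] at this
    exact this.trans (mul_le_mul_of_nonneg_right hLv hT.le)
  calc ∑ c, discard c
      ≤ ∑ c, (ε / (4 * m) * #(jobs c) + ε / (4 * L) * len c) :=
        sum_le_sum fun c _ => (hdisc c).trans_eq (by ring)
    _ = ε / (4 * m) * ∑ c, (#(jobs c) : ℝ) + ε / (4 * L) * ∑ c, len c := by
        rw [sum_add_distrib, mul_sum, mul_sum]
    _ ≤ ε / (4 * m) * (m * T) + ε / (4 * L) * (L * T) := by gcongr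
    _ = ε * T / 2 := by field_simp; ring

/-- Summing the per-call discard bound over the recursion tree gives at most εT/2
discarded jobs in total. -/
theorem stmt_17 {ι : Type*} [Fintype ι] (n Lv : ℕ) (ε m T : ℝ)
    (hε : 0 < ε) (hm : 0 < m) (hT : 0 < T) (hn : 1 < n)
    (len : ι → ℝ) (jobs : ι → Finset (Fin n)) (discard : ι → ℝ)
    (level : ι → ℕ)
    (hlev : ∀ c, level c < Lv)
    (hLv : (Lv : ℝ) ≤ Real.logb 2 n)
    (hlennn : ∀ c, 0 ≤ len c)
    (hlen : ∀ ℓ : ℕ, ∑ c ∈ Finset.univ.filter (fun c => level c = ℓ), len c ≤ T)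
    (hdisj : ∀ c₁ c₂, c₁ ≠ c₂ → Disjoint (jobs c₁) (jobs c₂))
    (hnT : (n : ℝ) ≤ m * T)
    (hdisc : ∀ c, discard c ≤ ε / (4 * m) * (jobs c).card
      + ε * len c / (4 * Real.logb 2 n)) :
    ∑ c, discard c ≤ ε * T / 2 :=
  stmt_17_general n Lv ε m T hε hm hT hn len jobs discard level hlev hLv hlen hdisj hnT hdisc
end
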